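/- Characterization of positive subgradients via the dual objective: for u* ∈ U* with φ(u*) ⊆ Y, one has u* ∈ ∂⁺W(0,y) if and only if y ∈ φ(u*), where W is the perturbation map W(u) = Inf ⋃_{x∈X} φ(x,u) with φ(x,u) = F(x) if G(x) ∩ (−D−u) ≠ ∅ and ∅ otherwise, ∂⁺W(0,y) consists of all u* ∈ −D° with y ∈ Inf ⋃_{u∈U}(W(u) − ⟨u*,u⟩c), and φ(u*) = Inf ⋃_{x∈X} (F(x) + Inf ⋃_{u∈G(x)+D} ⟨u*,u⟩{c}). -/

import Mathlib

open Set Pointwise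
open scoped Classical

/-- The extended space `Y ∪ {-∞, +∞}`. -/
abbrev EY (Y : Type*) := WithBot (WithTop Y)

/-- Embedding of `Y` into the extended space. -/
def toE {Y : Type*} (y : Y) : EY Y := ((y : WithTop Y) : EY Y)

/-- The element `+∞` of the extended space. -/
def posInf (Y : Type*) : EY Y := ((⊤ : WithTop Y) : EY Y)

variable {Y : Type*} [AddCommGroup Y] [Module ℝ Y] [TopologicalSpace Y]
  [IsTopologicalAddGroup Y] [ContinuousSMul ℝ Y]

/-- Weakly minimal elements with respect to the cone `C`. -/
def wMinSet (C A : Set Y) : Set Y := {y ∈ A | ({y} - interior C) ∩ A = ∅}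

/-- Weakly maximal elements with respect to the cone `C`. -/
def wMaxSet (C A : Set Y) : Set Y := {y ∈ A | ({y} + interior C) ∩ A = ∅}

/-- Upper closure (w.r.t. `C`) of a subset of the extended space. -/
noncomputable def upCloE (C : Set Y) (A : Set (EY Y)) : Set Y :=
  if (⊥ : EY Y) ∈ A then univ
  else if A = {posInf Y} then ∅
  else closure (toE ⁻¹' A + C)

/-- Infimal set (w.r.t. `C`) of a subset of the extended space. -/
noncomputable def infSE (C : Set Y) (A : Set (EY Y)) : Set (EY Y) :=
  if upCloE C A = univ then {⊥}
  else if upCloE C A = ∅ then {posInf Y}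
  else toE '' wMinSet C (upCloE C A)

/-- Lower closure (w.r.t. `C`) of a subset of the extended space. -/
noncomputable def loCloE (C : Set Y) (A : Set (EY Y)) : Set Y :=
  if posInf Y ∈ A then univ
  else if A = {(⊥ : EY Y)} then ∅
  else closure (toE ⁻¹' A - C)

/-- Supremal set (w.r.t. `C`) of a subset of the extended space. -/
noncomputable def supSE (C : Set Y) (A : Set (EY Y)) : Set (EY Y) :=
  if loCloE C A = univ then {posInf Y}
  else if loCloE C A = ∅ then {(⊥ : EY Y)}
  else toE '' wMaxSet C (loCloE C A)

variable {X U : Type*} [AddCommGroup X] [Module ℝ X]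
  [AddCommGroup U] [Module ℝ U] [TopologicalSpace U] [IsTopologicalAddGroup U]
  [ContinuousSMul ℝ U] [T2Space U] [LocallyConvexSpace ℝ U]

/-- The Lagrangian of the primal problem, for the fixed vector `c ∈ int C`. -/
noncomputable def lagr (C : Set Y) (c : Y) (F : X → Set (EY Y)) (G : X → Set U)
    (D : Set U) (x : X) (u' : U →L[ℝ] ℝ) : Set (EY Y) :=
  F x + infSE C (⋃ u ∈ G x + D, ({toE (u' u • c)} : Set (EY Y)))

/-- The dual objective function. -/
noncomputable def dualObj (C : Set Y) (c : Y) (F : X → Set (EY Y)) (G : X → Set U)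
    (D : Set U) (u' : U →L[ℝ] ℝ) : Set (EY Y) :=
  infSE C (⋃ x : X, lagr C c F G D x u')

/-- The feasible set `S = {x : G(x) ∩ (-D) ≠ ∅}`. -/
def feas (G : X → Set U) (D : Set U) : Set X := {x | (G x ∩ (-D)).Nonempty}

/-- The perturbation map `W`. -/
noncomputable def pertW (C : Set Y) (F : X → Set (EY Y)) (G : X → Set U)
    (D : Set U) (u : U) : Set (EY Y) :=
  infSE C (⋃ x ∈ {x : X | (G x ∩ (-D - {u})).Nonempty}, F x)

/-!
Everything is decided by upper closures: `infSE C A` depends only on `upCloE C A`, and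
`upCloE C (infSE C A) = upCloE C A`, because a closed upper set `K ≠ Y` is the closure of
`wMinSet C K + C` (slide a point of `K` along `-c` as far as it stays in `K`: the end point is
weakly minimal). Upper closures commute with unions and with translations, so the upper closure of
`⋃ u, (W(u) - ⟨u*, u⟩ c)` and that of the union of the Lagrangians are both the upper closure of
`⋃ x, (F(x) + {⟨u*, g + d⟩ c | g ∈ G(x), d ∈ D})`, and the two infimal sets coincide.
If `⟨u*, d⟩ < 0` for some `d ∈ D`, the values `⟨u*, g + t d⟩ c` are unbounded below, so the
Lagrangian contains `-∞` at every `x` with `F(x)` and `G(x)` nonempty and has no value in `Y`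
elsewhere; then the dual objective is not `Y`-valued, so `u* ∈ -D°` comes for free.
-/

open Filter Topology

section ExtendedArithmetic

theorem toE_injective {M : Type*} : Function.Injective (toE : M → EY M) := fun _ _ h => by
  simpa [toE] using h

theorem toE_ne_bot {M : Type*} (y : M) : toE y ≠ ⊥ := WithBot.coe_ne_bot

theorem toE_ne_posInf {M : Type*} (y : M) : toE y ≠ posInf M := by
  simp [toE, posInf]

theorem preimage_toE_singleton_posInf {M : Type*} : toE ⁻¹' {posInf M} = ∅ :=
  eq_empty_of_forall_notMem fun y => toE_ne_posInf y

theorem preimage_toE_biUnion_singleton {α M : Type*} (S : Set α) (φ : α → M) :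
    toE ⁻¹' (⋃ v ∈ S, {toE (φ v)}) = φ '' S := by
  ext z
  simp [toE_injective.eq_iff, eq_comm]

theorem bot_notMem_biUnion_toE {α M : Type*} (S : Set α) (φ : α → M) :
    ⊥ ∉ ⋃ v ∈ S, ({toE (φ v)} : Set (EY M)) := by
  simp [(toE_ne_bot _).symm]

variable {M : Type*} [Add M]

theorem add_eq_toE_iff {a b : EY M} {z : M} :
    a + b = toE z ↔ ∃ p q, a = toE p ∧ b = toE q ∧ p + q = z := by
  simp only [toE, WithBot.add_eq_coe, WithTop.add_eq_coe]
  constructor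
  · rintro ⟨_, _, rfl, rfl, p, q, rfl, rfl, rfl⟩
    exact ⟨p, q, rfl, rfl, rfl⟩
  · rintro ⟨p, q, rfl, rfl, rfl⟩
    exact ⟨p, q, rfl, rfl, p, q, rfl, rfl, rfl⟩

theorem preimage_toE_add (A B : Set (EY M)) :
    toE ⁻¹' (A + B) = toE ⁻¹' A + toE ⁻¹' B := by
  ext z
  simp only [mem_preimage, Set.mem_add]
  constructor
  · rintro ⟨a, ha, b, hb, hab⟩
    obtain ⟨p, q, rfl, rfl, rfl⟩ := add_eq_toE_iff.1 hab
    exact ⟨p, ha, q, hb, rfl⟩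
  · rintro ⟨p, hp, q, hq, rfl⟩
    exact ⟨toE p, hp, toE q, hq, add_eq_toE_iff.2 ⟨p, q, rfl, rfl, rfl⟩⟩

theorem bot_notMem_add {A B : Set (EY M)} (hA : ⊥ ∉ A) (hB : ⊥ ∉ B) : ⊥ ∉ A + B := by
  rintro ⟨a, ha, b, hb, hab⟩
  rcases WithBot.add_eq_bot.1 hab with rfl | rfl
  exacts [hA ha, hB hb]

end ExtendedArithmetic

theorem closure_add_closure {G : Type*} [Add G] [TopologicalSpace G] [ContinuousAdd G]
    (s t : Set G) : closure (s + closure t) = closure (s + t) := by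
  refine (closure_minimal ?_ isClosed_closure).antisymm
    (closure_mono (add_subset_add_left subset_closure))
  rintro _ ⟨a, ha, b, hb, rfl⟩
  exact map_mem_closure₂ continuous_add (subset_closure ha) hb fun a ha b hb => add_mem_add ha hb

theorem closure_add_singleton {G : Type*} [AddGroup G] [TopologicalSpace G] [ContinuousAdd G]
    (s : Set G) (b : G) : closure (s + {b}) = closure s + {b} := by
  simp only [add_singleton]
  exact ((Homeomorph.addRight b).image_closure s).symm

theorem Convex.add_subset_self_of_smul_subset {E : Type*} [AddCommGroup E] [Module ℝ E]
    {C : Set E} (hC : Convex ℝ C) (hCone : ∀ r : ℝ, 0 < r → r • C ⊆ C) : C + C ⊆ C := by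
  rintro _ ⟨x, hx, y, hy, rfl⟩
  have hmid : (2⁻¹ : ℝ) • x + (2⁻¹ : ℝ) • y ∈ C :=
    hC hx hy (by norm_num) (by norm_num) (by norm_num)
  have := hCone 2 two_pos (smul_mem_smul_set hmid)
  rwa [smul_add, smul_smul, smul_smul, mul_inv_cancel₀ two_ne_zero, one_smul, one_smul] at this

section Cone

variable {C : Set Y} {c : Y}

theorem eventually_add_smul_mem (hCone : ∀ r : ℝ, 0 < r → r • C ⊆ C) (hc : c ∈ interior C)
    (z : Y) : ∀ᶠ t : ℝ in atTop, z + t • c ∈ C := by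
  have hlim : Tendsto (fun t : ℝ => c + t⁻¹ • z) atTop (𝓝 c) := by
    simpa using tendsto_const_nhds.add ((tendsto_inv_atTop_zero (𝕜 := ℝ)).smul_const z)
  filter_upwards [hlim.eventually_mem (mem_interior_iff_mem_nhds.1 hc), eventually_gt_atTop 0]
    with t ht htpos
  have := hCone t htpos (smul_mem_smul_set ht)
  rwa [smul_add, smul_smul, mul_inv_cancel₀ htpos.ne', one_smul, add_comm] at this

theorem image_add_smul_add_eq_univ (hCone : ∀ r : ℝ, 0 < r → r • C ⊆ C) (hc : c ∈ interior C)
    (a : Y) {T : Set ℝ} (hT : ¬BddBelow T) : (fun t : ℝ => a + t • c) '' T + C = univ := by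
  refine eq_univ_of_forall fun y => ?_
  obtain ⟨t₀, ht₀⟩ := eventually_atTop.1 (eventually_add_smul_mem hCone hc (y - a))
  obtain ⟨t, htT, ht⟩ := not_bddBelow_iff.1 hT (-t₀)
  exact ⟨a + t • c, mem_image_of_mem _ htT, y - a + (-t) • c, ht₀ _ (by linarith),
    by simp only [neg_smul]; abel⟩

theorem add_smul_mem_wMinSet {K : Set Y} (hKC : K + C ⊆ K) {a : Y} {τ : ℝ}
    (ha : a + τ • c ∈ K) (hτ : ∀ t, a + t • c ∈ K → τ ≤ t) : a + τ • c ∈ wMinSet C K := by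
  refine ⟨ha, eq_empty_iff_forall_notMem.2 ?_⟩
  rintro _ ⟨⟨_, rfl, k, hk, rfl⟩, hw : a + τ • c - k ∈ K⟩
  have hlim : Tendsto (fun ε : ℝ => k - ε • c) (𝓝[>] 0) (𝓝 k) :=
    ((by fun_prop : Continuous fun ε : ℝ => k - ε • c).tendsto' 0 k (by simp)).mono_left
      nhdsWithin_le_nhds
  obtain ⟨ε, hεC, hε⟩ := ((hlim.eventually_mem (mem_interior_iff_mem_nhds.1 hk)).and
    self_mem_nhdsWithin).exists
  have := hτ (τ - ε) (by
    convert hKC (add_mem_add hw hεC) using 1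
    rw [sub_smul]; abel)
  linarith

theorem closure_wMinSet_add_eq (hCone : ∀ r : ℝ, 0 < r → r • C ⊆ C)
    (hc : c ∈ interior C) {K : Set Y} (hK : IsClosed K) (hKC : K + C ⊆ K) (hKne : K ≠ univ) :
    closure (wMinSet C K + C) = K := by
  refine (closure_minimal ((add_subset_add_right fun _ hy => hy.1).trans hKC) hK).antisymm
    fun a ha => ?_
  set S := {t : ℝ | a + t • c ∈ K}
  have hbdd : BddBelow S := by
    by_contra hS
    refine hKne (eq_univ_of_univ_subset ?_)
    rw [← image_add_smul_add_eq_univ hCone hc a hS]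
    exact (add_subset_add_right (image_subset_iff.2 fun t ht => ht)).trans hKC
  have hS : IsClosed S := hK.preimage (by fun_prop)
  have h0 : (0 : ℝ) ∈ S := by simpa [S] using ha
  have hmin := add_smul_mem_wMinSet hKC (hS.csInf_mem ⟨0, h0⟩ hbdd)
    fun t ht => csInf_le hbdd ht
  have hlim : Tendsto (fun ε : ℝ => a + ε • c) (𝓝[>] 0) (𝓝 a) :=
    ((by fun_prop : Continuous fun ε : ℝ => a + ε • c).tendsto' 0 a (by simp)).mono_left
      nhdsWithin_le_nhds
  refine mem_closure_of_tendsto hlim (eventually_nhdsWithin_of_forall fun ε hε => ?_)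
  have hpos : 0 < ε - sInf S := by linarith [mem_Ioi.1 hε, csInf_le hbdd h0]
  refine ⟨_, hmin, (ε - sInf S) • c, hCone _ hpos (smul_mem_smul_set (interior_subset hc)), ?_⟩
  simp only [sub_smul]; abel

end Cone

section UpperClosure

variable {E : Type*} [AddCommGroup E] [TopologicalSpace E] {C : Set E}

theorem upCloE_eq_ite (A : Set (EY E)) :
    upCloE C A = if ⊥ ∈ A then univ else closure (toE ⁻¹' A + C) := by
  unfold upCloE
  split_ifs with hbot hA
  · rfl
  · simp [hA, preimage_toE_singleton_posInf]
  · rfl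

theorem upCloE_of_bot_mem {A : Set (EY E)} (h : ⊥ ∈ A) : upCloE C A = univ := by
  simp [upCloE_eq_ite, h]

theorem upCloE_of_bot_notMem {A : Set (EY E)} (h : ⊥ ∉ A) :
    upCloE C A = closure (toE ⁻¹' A + C) := by
  simp [upCloE_eq_ite, h]

theorem bot_notMem_of_upCloE_ne_univ {A : Set (EY E)} (h : upCloE C A ≠ univ) : ⊥ ∉ A :=
  fun hA => h (upCloE_of_bot_mem hA)

theorem upCloE_singleton_posInf : upCloE C {posInf E} = ∅ := by
  rw [upCloE_of_bot_notMem fun h => WithBot.bot_ne_coe h, preimage_toE_singleton_posInf,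
    empty_add, closure_empty]

theorem upCloE_empty : upCloE C (∅ : Set (EY E)) = ∅ := by
  rw [upCloE_of_bot_notMem (notMem_empty _), preimage_empty, empty_add, closure_empty]

theorem infSE_empty : infSE C (∅ : Set (EY E)) = {posInf E} := by
  rw [infSE, upCloE_empty, if_neg empty_ne_univ, if_pos rfl]

theorem infSE_congr {A B : Set (EY E)} (h : upCloE C A = upCloE C B) : infSE C A = infSE C B := by
  simp only [infSE, h]

theorem infSE_subset_range_toE_iff {A : Set (EY E)} :
    infSE C A ⊆ range toE ↔ upCloE C A ≠ univ ∧ upCloE C A ≠ ∅ := by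
  unfold infSE
  split_ifs with h1 h2
  · simpa [h1] using fun y => toE_ne_bot y
  · simpa [h2] using fun y => toE_ne_posInf y
  · exact iff_of_true (image_subset_range _ _) ⟨h1, h2⟩

theorem isClosed_upCloE (A : Set (EY E)) : IsClosed (upCloE C A) := by
  rw [upCloE_eq_ite]
  split_ifs
  exacts [isClosed_univ, isClosed_closure]

theorem upCloE_add_subset [Module ℝ E] [ContinuousAdd E] (hC : Convex ℝ C)
    (hCone : ∀ r : ℝ, 0 < r → r • C ⊆ C) (A : Set (EY E)) : upCloE C A + C ⊆ upCloE C A := by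
  rw [upCloE_eq_ite]
  split_ifs
  · exact subset_univ _
  · calc closure (toE ⁻¹' A + C) + C ⊆ closure (toE ⁻¹' A + C + C) := by
          simpa only [closure_add_closure, add_comm _ C] using
            subset_closure (s := C + closure (toE ⁻¹' A + C))
      _ ⊆ closure (toE ⁻¹' A + C) := by
          rw [add_assoc]
          exact closure_mono (add_subset_add_left (hC.add_subset_self_of_smul_subset hCone))



theorem upCloE_iUnion {ι : Sort*} (A : ι → Set (EY E)) :
    upCloE C (⋃ i, A i) = closure (⋃ i, upCloE C (A i)) := by
  by_cases h : ∃ i, ⊥ ∈ A i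
  · obtain ⟨i, hi⟩ := h
    rw [upCloE_of_bot_mem (mem_iUnion.2 ⟨i, hi⟩), eq_comm, ← univ_subset_iff,
      ← upCloE_of_bot_mem (C := C) hi]
    exact (subset_iUnion (fun j => upCloE C (A j)) i).trans subset_closure
  · rw [not_exists] at h
    rw [upCloE_of_bot_notMem (by simpa using h)]
    simp only [upCloE_of_bot_notMem (h _), preimage_iUnion, iUnion_add]
    exact (closure_mono (iUnion_mono fun i => subset_closure)).antisymm
      (closure_minimal (iUnion_subset fun i => closure_mono
        (subset_iUnion (fun j => toE ⁻¹' A j + C) i)) isClosed_closure)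

theorem upCloE_iUnion_congr {ι : Sort*} {A B : ι → Set (EY E)}
    (h : ∀ i, upCloE C (A i) = upCloE C (B i)) : upCloE C (⋃ i, A i) = upCloE C (⋃ i, B i) := by
  simp only [upCloE_iUnion, h]

theorem upCloE_add [ContinuousAdd E] {A B : Set (EY E)} (hA : ⊥ ∉ A) (hB : ⊥ ∉ B) :
    upCloE C (A + B) = closure (toE ⁻¹' A + upCloE C B) := by
  rw [upCloE_of_bot_notMem (bot_notMem_add hA hB), upCloE_of_bot_notMem hB, preimage_toE_add,
    closure_add_closure, add_assoc]

theorem upCloE_add_singleton [ContinuousAdd E] (A : Set (EY E)) (b : E) :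
    upCloE C (A + {toE b}) = upCloE C A + {b} := by
  by_cases hA : ⊥ ∈ A
  · have hAb : ⊥ ∈ A + {toE b} := ⟨⊥, hA, toE b, rfl, WithBot.bot_add _⟩
    rw [upCloE_of_bot_mem hA, upCloE_of_bot_mem hAb, univ_add (singleton_nonempty b)]
  · rw [upCloE_of_bot_notMem hA, upCloE_of_bot_notMem (bot_notMem_add hA (toE_ne_bot b).symm),
      preimage_toE_add, ← image_singleton, preimage_image_eq _ toE_injective,
      ← closure_add_singleton, add_right_comm]

end UpperClosure

section InfimalSet

variable {C : Set Y} {c : Y}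

theorem upCloE_infSE (hC : Convex ℝ C) (hCone : ∀ r : ℝ, 0 < r → r • C ⊆ C)
    (hc : c ∈ interior C) (A : Set (EY Y)) : upCloE C (infSE C A) = upCloE C A := by
  unfold infSE
  split_ifs with h1 h2
  · rw [h1, upCloE_of_bot_mem (mem_singleton _)]
  · rw [h2, upCloE_singleton_posInf]
  · rw [upCloE_of_bot_notMem (by simp [toE_ne_bot]), preimage_image_eq _ toE_injective]
    exact closure_wMinSet_add_eq hCone hc (isClosed_upCloE A) (upCloE_add_subset hC hCone A) h1

theorem infSE_nonempty (hC : Convex ℝ C) (hCone : ∀ r : ℝ, 0 < r → r • C ⊆ C)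
    (hc : c ∈ interior C) (A : Set (EY Y)) : (infSE C A).Nonempty := by
  have key := upCloE_infSE hC hCone hc A
  unfold infSE at key ⊢
  split_ifs at key ⊢ with h1 h2
  · exact singleton_nonempty _
  · exact singleton_nonempty _
  · refine nonempty_iff_ne_empty.2 fun h => h2 ?_
    rw [← key, h, upCloE_empty]

theorem upCloE_infSE_add_singleton (hC : Convex ℝ C) (hCone : ∀ r : ℝ, 0 < r → r • C ⊆ C)
    (hc : c ∈ interior C) (A : Set (EY Y)) (b : Y) :
    upCloE C (infSE C A + {toE b}) = upCloE C (A + {toE b}) := by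
  rw [upCloE_add_singleton, upCloE_add_singleton, upCloE_infSE hC hCone hc]

theorem upCloE_add_infSE (hC : Convex ℝ C) (hCone : ∀ r : ℝ, 0 < r → r • C ⊆ C)
    (hc : c ∈ interior C) {A B : Set (EY Y)} (hB : ⊥ ∉ B) (h : ⊥ ∉ A + infSE C B) :
    upCloE C (A + infSE C B) = upCloE C (A + B) := by
  rcases A.eq_empty_or_nonempty with rfl | ⟨a, ha⟩
  · simp only [empty_add]
  have hI : ⊥ ∉ infSE C B := fun hI => h ⟨a, ha, ⊥, hI, WithBot.add_bot a⟩
  have hA : ⊥ ∉ A := fun hA => by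
    obtain ⟨i, hi⟩ := infSE_nonempty hC hCone hc B
    exact h ⟨⊥, hA, i, hi, WithBot.bot_add i⟩
  rw [upCloE_add hA hI, upCloE_add hA hB, upCloE_infSE hC hCone hc]

end InfimalSet

theorem iUnion_add_biUnion_singleton_eq {X U M : Type*} [AddCommGroup U] [Add M]
    (F : X → Set M) (G : X → Set U) (D : Set U) (φ : U → M) :
    ⋃ x, F x + ⋃ v ∈ G x + D, {φ v} =
      ⋃ u, (⋃ x ∈ {x | (G x ∩ (-D - {u})).Nonempty}, F x) + {φ (-u)} := by
  have hfeas : ∀ x u, (G x ∩ (-D - {u})).Nonempty ↔ -u ∈ G x + D := by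
    simp only [sub_singleton, inter_nonempty, mem_image]
    refine fun x u => ⟨?_, ?_⟩
    · rintro ⟨_, hg, e, he, rfl⟩
      exact (show e - u + -e = -u by abel) ▸ add_mem_add hg he
    · intro h
      obtain ⟨g, hg, d, hd, hgd⟩ := Set.mem_add.1 h
      exact ⟨g, hg, -d, by simpa using hd, by rw [← neg_neg u, ← hgd]; abel⟩
  ext e
  simp only [mem_iUnion, Set.mem_add, mem_singleton_iff, mem_ofPred_eq, exists_prop]
  constructor
  · rintro ⟨x, f, hf, _, ⟨v, hv, rfl⟩, rfl⟩
    exact ⟨-v, f, ⟨x, (hfeas x (-v)).2 (by rwa [neg_neg]), hf⟩, _, by rw [neg_neg], rfl⟩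
  · rintro ⟨u, f, ⟨x, hx, hf⟩, _, rfl, rfl⟩
    exact ⟨x, f, hf, φ (-u), ⟨-u, (hfeas x u).1 hx, rfl⟩, rfl⟩

section Lagrangian

variable {X U : Type*} [AddCommGroup U] [Module ℝ U] [TopologicalSpace U]
variable {C : Set Y} {c : Y} {F : X → Set (EY Y)} {G : X → Set U} {D : Set U} {u' : U →L[ℝ] ℝ}

theorem bot_mem_lagr_of_neg (hCone : ∀ r : ℝ, 0 < r → r • C ⊆ C) (hc : c ∈ interior C)
    (hDcone : ∀ r : ℝ, 0 < r → r • D ⊆ D) {x : X} (hF : (F x).Nonempty) (hG : (G x).Nonempty)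
    {d : U} (hd : d ∈ D) (hneg : u' d < 0) : ⊥ ∈ lagr C c F G D x u' := by
  obtain ⟨f, hf⟩ := hF
  obtain ⟨g, hg⟩ := hG
  have hT : ¬BddBelow (u' '' (G x + D)) := by
    rintro ⟨L, hL⟩
    have hlim : Tendsto (fun t : ℝ => u' g + t * u' d) atTop atBot :=
      tendsto_atBot_add_const_left _ _ (tendsto_id.atTop_mul_const_of_neg hneg)
    obtain ⟨t, htL, htpos⟩ := ((hlim.eventually_lt_atBot L).and (eventually_gt_atTop 0)).exists
    have := hL ⟨g + t • d, add_mem_add hg (hDcone t htpos (smul_mem_smul_set hd)), rfl⟩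
    simp only [map_add, map_smul, smul_eq_mul] at this
    linarith
  have hB : upCloE C (⋃ v ∈ G x + D, {toE (u' v • c)}) = univ := by
    rw [upCloE_of_bot_notMem (bot_notMem_biUnion_toE _ _), preimage_toE_biUnion_singleton,
      eq_univ_iff_forall]
    have := image_add_smul_add_eq_univ hCone hc 0 hT
    simp only [zero_add, image_image] at this
    exact fun y => subset_closure (this ▸ mem_univ y)
  exact ⟨f, hf, ⊥, by rw [infSE, if_pos hB]; rfl, WithBot.add_bot f⟩

theorem nonneg_of_dualObj_subset_range_toE (hCone : ∀ r : ℝ, 0 < r → r • C ⊆ C)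
    (hc : c ∈ interior C) (hDcone : ∀ r : ℝ, 0 < r → r • D ⊆ D)
    (hphi : dualObj C c F G D u' ⊆ range toE) : ∀ d ∈ D, 0 ≤ u' d := by
  obtain ⟨hne_univ, hne_empty⟩ := infSE_subset_range_toE_iff.1 hphi
  have hbot := bot_notMem_of_upCloE_ne_univ hne_univ
  -- some Lagrangian takes a finite value; there `F x` and `G x` must be nonempty
  obtain ⟨z, x, hz⟩ : ∃ z x, toE z ∈ lagr C c F G D x u' := by
    by_contra! h
    refine hne_empty ?_
    have : toE ⁻¹' (⋃ x, lagr C c F G D x u') = ∅ := by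
      simpa [eq_empty_iff_forall_notMem] using h
    rw [upCloE_of_bot_notMem hbot, this, empty_add, closure_empty]
  obtain ⟨f, hf, i, hi, hfi⟩ := hz
  obtain ⟨p, q, rfl, rfl, -⟩ := add_eq_toE_iff.1 hfi
  have hG : (G x).Nonempty := by
    refine nonempty_iff_ne_empty.2 fun hG => toE_ne_posInf q ?_
    rwa [hG, empty_add, biUnion_empty, infSE_empty] at hi
  intro d hd
  by_contra! hneg
  exact hbot (mem_iUnion.2 ⟨x, bot_mem_lagr_of_neg hCone hc hDcone ⟨_, hf⟩ hG hd hneg⟩)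

end Lagrangian

theorem stmt_16_general (C : Set Y) (c : Y) (hC : Convex ℝ C)
    (hCone : ∀ r : ℝ, 0 < r → r • C ⊆ C)
    (hc : c ∈ interior C)
    (F : X → Set (EY Y)) (G : X → Set U) (D : Set U)
    (hDcone : ∀ r : ℝ, 0 < r → r • D ⊆ D)
    (u' : U →L[ℝ] ℝ)
    (hphi : dualObj C c F G D u' ⊆ range (toE : Y → EY Y)) :
    ∀ y : Y,
      ((∀ d ∈ D, 0 ≤ u' d) ∧
        toE y ∈ infSE C
          (⋃ u : U, (pertW C F G D u + ({toE (-(u' u • c))} : Set (EY Y))))) ↔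
      toE y ∈ dualObj C c F G D u' := by
  have hbot : ⊥ ∉ ⋃ x, lagr C c F G D x u' :=
    bot_notMem_of_upCloE_ne_univ (infSE_subset_range_toE_iff.1 hphi).1
  have hinf : infSE C (⋃ u, pertW C F G D u + {toE (-(u' u • c))}) = dualObj C c F G D u' := by
    refine infSE_congr ?_
    calc upCloE C (⋃ u, pertW C F G D u + {toE (-(u' u • c))})
        = upCloE C (⋃ u, (⋃ x ∈ {x | (G x ∩ (-D - {u})).Nonempty}, F x) + {toE (-(u' u • c))}) :=
          upCloE_iUnion_congr fun u => upCloE_infSE_add_singleton hC hCone hc _ _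
      _ = upCloE C (⋃ x, F x + ⋃ v ∈ G x + D, {toE (u' v • c)}) := by
          rw [iUnion_add_biUnion_singleton_eq]
          simp only [map_neg, neg_smul]
      _ = upCloE C (⋃ x, lagr C c F G D x u') :=
          upCloE_iUnion_congr fun x => (upCloE_add_infSE hC hCone hc (bot_notMem_biUnion_toE _ _)
            fun h => hbot (mem_iUnion.2 ⟨x, h⟩)).symm
  intro y
  rw [hinf, and_iff_right (nonneg_of_dualObj_subset_range_toE hCone hc hDcone hphi)]

/-- Characterization of positive subgradients of the perturbation map `W` at `(0, y)`
via the dual objective function. -/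
theorem stmt_16 (C : Set Y) (c : Y) (hC : Convex ℝ C)
    (hCone : ∀ r : ℝ, 0 < r → r • C ⊆ C)
    (hInt : (interior C).Nonempty) (hIntNe : interior C ≠ univ)
    (hc : c ∈ interior C)
    (F : X → Set (EY Y)) (G : X → Set U) (D : Set U)
    (hDcl : IsClosed D) (hDconv : Convex ℝ D)
    (hDcone : ∀ r : ℝ, 0 < r → r • D ⊆ D)
    (hDint : (interior D).Nonempty) (hDproper : D ≠ univ)
    (u' : U →L[ℝ] ℝ)
    (hphi : dualObj C c F G D u' ⊆ range (toE : Y → EY Y)) :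
    ∀ y : Y,
      ((∀ d ∈ D, 0 ≤ u' d) ∧
        toE y ∈ infSE C
          (⋃ u : U, (pertW C F G D u + ({toE (-(u' u • c))} : Set (EY Y))))) ↔
      toE y ∈ dualObj C c F G D u' :=
  stmt_16_general C c hC hCone hc F G D hDcone u' hphi
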